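/- arXiv:1605.04353 — 8 statements merged into one kernel-verified Lean document; each statement's English description precedes it below -/
import Mathlib

section
/- If a composition c cannot be written in the form c = x y x for compositions x, y (with x nonempty), then two distinct occurrences of c as consecutive blocks within any composition a cannot overlap. -/
/-- An occurrence of `c` as a consecutive block in `a` at position `i`. -/
def OccursAt (c a : List ℕ) (i : ℕ) : Prop :=
  i + c.length ≤ a.length ∧ (a.drop i).take c.length = c

/-!
Two overlapping occurrences of `c` at positions `i < i' < i + |c|` show that `c` has the period
`p = i' - i < |c|`. A periodic word has a nonempty border no longer than half of it: with
`b = (|c| - 1) % p + 1` the suffix of length `b` starts at a positive multiple of `p`, hence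
equals the prefix of length `b`, and `b ≤ p ≤ |c| - b`. So `c = x ++ y ++ x` with `|x| = b`.
-/

namespace List

variable {α : Type*}

theorem exists_eq_append_append_of_drop_eq_take {l : List α} {b : ℕ} (hb : 2 * b ≤ l.length)
    (hborder : l.drop (l.length - b) = l.take b) : ∃ y, l = l.take b ++ y ++ l.take b := by
  refine ⟨(l.take (l.length - b)).drop b, ?_⟩
  have hprefix : l.take b = (l.take (l.length - b)).take b := by
    rw [take_take, Nat.min_eq_left (by lia)]
  calc l = l.take (l.length - b) ++ l.drop (l.length - b) := (take_append_drop _ _).symm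
    _ = l.take b ++ (l.take (l.length - b)).drop b ++ l.take b := by
      rw [hborder, hprefix, take_append_drop]

theorem HasPeriod.exists_eq_append_append {l : List α} {p : ℕ} (hl : l.HasPeriod p)
    (hp : 0 < p) (hpl : p < l.length) : ∃ x y, x ≠ [] ∧ l = x ++ y ++ x := by
  obtain ⟨b, hb⟩ : ∃ b, b = (l.length - 1) % p + 1 := ⟨_, rfl⟩
  have hdiv : l.length - b = p * ((l.length - 1) / p) := by
    have := Nat.mod_add_div (l.length - 1) p
    lia
  have hbp : b ≤ p := hb ▸ Nat.mod_lt _ hp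
  have hpb : p ≤ l.length - b := hdiv ▸ Nat.le_mul_of_pos_right p (Nat.div_pos (by lia) hp)
  have hborder : l.drop (l.length - b) = l.take b := by
    refine ext_getElem? fun j => ?_
    rw [getElem?_drop]
    by_cases hj : j < b
    · rw [getElem?_take_of_lt hj, ← hl.getElem?_mod _ _ _ (by lia), hdiv,
        Nat.mul_add_mod_self_left, Nat.mod_eq_of_lt (by lia)]
    · rw [getElem?_eq_none (by lia), getElem?_eq_none (by simp; lia)]
  obtain ⟨y, hy⟩ := exists_eq_append_append_of_drop_eq_take (by lia) hborder
  exact ⟨l.take b, y, ne_nil_of_length_pos (by rw [length_take]; lia), hy⟩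

end List

theorem OccursAt.getElem?_add {w a : List ℕ} {i j : ℕ} (h : OccursAt w a i)
    (hj : j < w.length) : a[i + j]? = w[j]? := by
  rw [← h.2, List.getElem?_take_of_lt hj, List.getElem?_drop]

theorem OccursAt.hasPeriod_sub {w a : List ℕ} {i i' : ℕ} (hi : OccursAt w a i)
    (hi' : OccursAt w a i') (hii' : i ≤ i') : w.HasPeriod (i' - i) := by
  refine List.hasPeriod_iff_getElem?.2 fun j hj => ?_
  rw [← hi'.getElem?_add (by lia), ← hi.getElem?_add (by lia)]
  congr 1
  lia

/-- If a composition `c` cannot be written as `x ++ y ++ x` with `x` nonempty,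
then two distinct occurrences of `c` in any composition `a` cannot overlap. -/
theorem occurrences_cannot_overlap (c : List ℕ)
    (h : ¬ ∃ x y : List ℕ, x ≠ [] ∧ c = x ++ y ++ x) :
    ∀ (a : List ℕ) (i i' : ℕ), OccursAt c a i → OccursAt c a i' → i < i' →
      i + c.length ≤ i' := by
  intro a i i' hi hi' hlt
  by_contra! hoverlap
  exact h ((hi.hasPeriod_sub hi' hlt.le).exists_eq_append_append (by lia) (by lia))
end

section
/- For a fixed composition c of total size s = |c|, the generating function of pairs (a, marked occurrence) where a is a composition containing a marked run of exactly k consecutive copies of c (preceded and followed by composition segments not ending/starting with c) is F(z) = (1-z)^2 (1-z^s)^2 z^{ks} (1-2z)^{-2}. -/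
open PowerSeries

/-- The number of pairs `(u, v)` of compositions with `u` not ending with the
block `c`, `v` not starting with the block `c`, and total size
`u.sum + k * c.sum + v.sum = n`.  Such a pair encodes a composition
`u ++ c^k ++ v` with a marked run of exactly `k` consecutive copies of `c`. -/
noncomputable def markedRunCount (c : List ℕ) (k n : ℕ) : ℕ :=
  {uv : List ℕ × List ℕ |
      (∀ p ∈ uv.1, 0 < p) ∧ (∀ p ∈ uv.2, 0 < p) ∧
      ¬ c <:+ uv.1 ∧ ¬ c <+: uv.2 ∧
      uv.1.sum + k * c.sum + uv.2.sum = n}.ncard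

/-!
Splitting a marked composition as `u ++ c^k ++ v` makes its generating function the product
`z^{ks} A(z) B(z)`, where `A` and `B` count the compositions not ending, resp. not starting,
with `c`. A composition of size `n` ends with `c` exactly when it is `u ++ c` for a composition
`u` of size `n - s`, so `A = (1 - z^s) K` with `K` the generating function of all
compositions; reversing compositions gives `B = A`. Finally there
are `2^{n-1}` compositions of `n ≥ 1`, whence `K (1 - 2z) = 1 - z`.
-/

open Finset.HasAntidiagonal (antidiagonal mem_antidiagonal)

theorem mk_pow_mul_one_sub_C_mul_X {S : Type*} [CommRing S] (a : S) :
    mk (fun n => a ^ n) * (1 - C a * X) = 1 := by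
  have h : rescale a (mk 1) = mk fun n => a ^ n := by ext; simp [coeff_rescale]
  simpa [h] using congrArg (rescale a) (mk_one_mul_one_sub_eq_one S)

def compositionList (n : ℕ) : Finset (List ℕ) :=
  (Finset.univ : Finset (Composition n)).map ⟨Composition.blocks, fun _ _ => Composition.ext⟩

theorem mem_compositionList {n : ℕ} {l : List ℕ} :
    l ∈ compositionList n ↔ (∀ p ∈ l, 0 < p) ∧ l.sum = n := by
  constructor
  · intro h
    obtain ⟨⟨_, hpos, hsum⟩, -, rfl⟩ := Finset.mem_map.1 h
    exact ⟨fun p hp => hpos hp, hsum⟩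
  · rintro ⟨hpos, hsum⟩
    exact Finset.mem_map_of_mem _
      (Finset.mem_univ (⟨l, fun hp => hpos _ hp, hsum⟩ : Composition n))

theorem card_compositionList (n : ℕ) : (compositionList n).card = 2 ^ (n - 1) := by
  rw [compositionList, Finset.card_map, Finset.card_univ, composition_card]

noncomputable def compositionGF (P : List ℕ → Prop) [DecidablePred P] : ℚ⟦X⟧ :=
  mk fun n => ((compositionList n).filter P).card

theorem compositionGF_true_eq :
    compositionGF (fun _ => True) = 1 + X * mk fun n => (2 : ℚ) ^ n := by
  ext (_ | n) <;> simp [compositionGF, card_compositionList]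

theorem compositionGF_true_mul_one_sub_two_X :
    compositionGF (fun _ => True) * (1 - 2 * X) = 1 - X := by
  have h := mk_pow_mul_one_sub_C_mul_X (2 : ℚ)
  rw [map_ofNat] at h
  rw [compositionGF_true_eq, add_mul, mul_assoc, h]
  ring

theorem compositionGF_add_compositionGF_not (P : List ℕ → Prop) [DecidablePred P] :
    compositionGF P + compositionGF (fun l => ¬ P l) = compositionGF (fun _ => True) := by
  ext n
  simp only [compositionGF, map_add, coeff_mk, Finset.filter_true]
  exact_mod_cast Finset.card_filter_add_card_filter_not P

theorem compositionGF_isSuffix {c : List ℕ} (hpos : ∀ p ∈ c, 0 < p) :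
    compositionGF (c <:+ ·) = X ^ c.sum * compositionGF (fun _ => True) := by
  ext n
  rw [coeff_X_pow_mul']
  split_ifs with h
  · obtain ⟨m, rfl⟩ := Nat.exists_eq_add_of_le' h
    simp only [compositionGF, coeff_mk, Nat.add_sub_cancel, Finset.filter_true, Nat.cast_inj]
    refine (Finset.card_nbij (· ++ c) ?_ ?_ ?_).symm
    · intro u hu
      rw [Finset.mem_coe, mem_compositionList] at hu
      simp only [Finset.coe_filter, mem_compositionList, Set.mem_ofPred_eq]
      refine ⟨⟨?_, by rw [List.sum_append, hu.2]⟩, List.suffix_append u c⟩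
      simpa [or_imp, forall_and] using ⟨hu.1, hpos⟩
    · exact fun u _ v _ h => List.append_cancel_right h
    · rintro l hl
      simp only [Finset.coe_filter, mem_compositionList, Set.mem_ofPred_eq] at hl
      obtain ⟨⟨hl, hsum⟩, u, rfl⟩ := hl
      rw [List.sum_append, Nat.add_right_cancel_iff] at hsum
      exact ⟨u, mem_compositionList.2 ⟨fun p hp => hl p (List.mem_append_left c hp), hsum⟩, rfl⟩
  · simp only [compositionGF, coeff_mk, Nat.cast_eq_zero, Finset.card_eq_zero,
      Finset.filter_eq_empty_iff, mem_compositionList]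
    rintro _ ⟨-, hsum⟩ ⟨u, rfl⟩
    rw [List.sum_append] at hsum
    omega

theorem compositionGF_not_isSuffix {c : List ℕ} (hpos : ∀ p ∈ c, 0 < p) :
    compositionGF (fun l => ¬ c <:+ l) = (1 - X ^ c.sum) * compositionGF (fun _ => True) := by
  linear_combination compositionGF_add_compositionGF_not (c <:+ ·) -
    compositionGF_isSuffix hpos

theorem compositionGF_comp_reverse (P : List ℕ → Prop) [DecidablePred P] :
    compositionGF (fun l => P l.reverse) = compositionGF P := by
  ext n
  simp only [compositionGF, coeff_mk, Nat.cast_inj]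
  refine Finset.card_nbij' List.reverse List.reverse ?_ ?_ ?_ ?_ <;>
    intro l <;> simp [mem_compositionList]

theorem compositionGF_not_isPrefix {c : List ℕ} (hpos : ∀ p ∈ c, 0 < p) :
    compositionGF (fun l => ¬ c <+: l) = (1 - X ^ c.sum) * compositionGF (fun _ => True) := by
  have hreverse : compositionGF (fun l => ¬ c <+: l) =
      compositionGF (fun l => ¬ c.reverse <:+ l.reverse) := by
    simp only [compositionGF, List.reverse_suffix]
  rw [hreverse, compositionGF_comp_reverse (fun l => ¬ c.reverse <:+ l),
    compositionGF_not_isSuffix (by simpa using hpos), List.sum_reverse]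

theorem coeff_compositionGF_mul (P Q : List ℕ → Prop) [DecidablePred P] [DecidablePred Q]
    (m : ℕ) :
    coeff m (compositionGF P * compositionGF Q) =
      {uv : List ℕ × List ℕ | (∀ p ∈ uv.1, 0 < p) ∧ (∀ p ∈ uv.2, 0 < p) ∧
        P uv.1 ∧ Q uv.2 ∧ uv.1.sum + uv.2.sum = m}.ncard := by
  have hset : {uv : List ℕ × List ℕ | (∀ p ∈ uv.1, 0 < p) ∧ (∀ p ∈ uv.2, 0 < p) ∧
        P uv.1 ∧ Q uv.2 ∧ uv.1.sum + uv.2.sum = m} =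
      ↑((antidiagonal m).biUnion fun ij =>
        (compositionList ij.1).filter P ×ˢ (compositionList ij.2).filter Q) := by
    ext ⟨u, v⟩
    simp only [Set.mem_ofPred_eq, Finset.coe_biUnion, Finset.mem_coe, mem_antidiagonal,
      Finset.mem_product, Finset.mem_filter, mem_compositionList, Set.mem_iUnion, Prod.exists]
    constructor
    · rintro ⟨hu, hv, hP, hQ, rfl⟩
      exact ⟨_, _, rfl, ⟨⟨hu, rfl⟩, hP⟩, ⟨hv, rfl⟩, hQ⟩
    · rintro ⟨_, _, rfl, ⟨⟨hu, rfl⟩, hP⟩, ⟨hv, rfl⟩, hQ⟩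
      exact ⟨hu, hv, hP, hQ, rfl⟩
  rw [hset, Set.ncard_coe_finset, Finset.card_biUnion, coeff_mul]
  · simp [compositionGF]
  · intro ij _ ij' _ hne
    refine Finset.disjoint_left.2 fun uv h h' => hne ?_
    simp only [Finset.mem_product, Finset.mem_filter, mem_compositionList] at h h'
    exact Prod.ext (h.1.1.2.symm.trans h'.1.1.2) (h.2.1.2.symm.trans h'.2.1.2)

theorem mk_markedRunCount (c : List ℕ) (k : ℕ) :
    mk (fun n => (markedRunCount c k n : ℚ)) = X ^ (k * c.sum) *
      (compositionGF (fun l => ¬ c <:+ l) * compositionGF (fun l => ¬ c <+: l)) := by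
  ext n
  rw [coeff_mk, coeff_X_pow_mul', markedRunCount]
  split_ifs with h
  · rw [coeff_compositionGF_mul]
    congr 3 with uv
    simp only [and_congr_right_iff]
    omega
  · rw [Nat.cast_eq_zero]
    convert Set.ncard_empty (List ℕ × List ℕ)
    exact Set.eq_empty_of_forall_notMem fun uv huv => h (by have := huv.2.2.2.2; omega)

theorem marked_run_gf_general (c : List ℕ) (hpos : ∀ p ∈ c, 0 < p) (k : ℕ) :
    PowerSeries.mk (fun n => (markedRunCount c k n : ℚ)) * (1 - 2 * X) ^ 2
      = (1 - X) ^ 2 * (1 - X ^ c.sum) ^ 2 * X ^ (k * c.sum) := by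
  calc mk (fun n => (markedRunCount c k n : ℚ)) * (1 - 2 * X) ^ 2
      = X ^ (k * c.sum) * (1 - X ^ c.sum) ^ 2 *
          (compositionGF (fun _ => True) * (1 - 2 * X)) ^ 2 := by
        rw [mk_markedRunCount, compositionGF_not_isSuffix hpos, compositionGF_not_isPrefix hpos]
        ring
    _ = (1 - X) ^ 2 * (1 - X ^ c.sum) ^ 2 * X ^ (k * c.sum) := by
        rw [compositionGF_true_mul_one_sub_two_X]; ring

/-- For a fixed composition `c` of total size `s = |c|`, the generating function
of compositions with a marked run of exactly `k` consecutive copies of `c` is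
`F(z) = (1-z)^2 (1-z^s)^2 z^{ks} (1-2z)^{-2}`. -/
theorem marked_run_gf (c : List ℕ) (hc : c ≠ []) (hpos : ∀ p ∈ c, 0 < p) (k : ℕ) :
    PowerSeries.mk (fun n => (markedRunCount c k n : ℚ)) * (1 - 2 * X) ^ 2
      = (1 - X) ^ 2 * (1 - X ^ c.sum) ^ 2 * X ^ (k * c.sum) :=
  marked_run_gf_general c hpos k
end

section
/- The coefficient of z^n in F(z) = (1-z)^2 (1-z^s)^2 z^{ks} (1-2z)^{-2} satisfies [z^n]F(z) ~ (n/4)(1 - 2^{-s})^2 2^{n - ks} as n → ∞. -/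
/-!
Since `((1 - a z)^2)⁻¹ = ∑ (n + 1) aⁿ zⁿ`, for a polynomial `P` and `n ≥ deg P` the coefficient
`[zⁿ] P(z) (1 - a z)⁻²` equals `aⁿ (P(a⁻¹) n + B)` with `B` independent of `n`; so it is
asymptotic to `P(a⁻¹) n aⁿ` as soon as `P(a⁻¹) ≠ 0`. Here `a = 2` and
`P(1/2) = (1/4) (1 - 2⁻ˢ)² 2⁻ᵏˢ`, which is nonzero because `s > 0`.
-/

open PowerSeries Filter Finset

namespace PowerSeries

variable {K : Type*} [Field K]

theorem coeff_inv_one_sub_C_mul_X_pow_succ (a : K) (d n : ℕ) :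
    coeff n ((1 - C a * X) ^ (d + 1))⁻¹ = a ^ n * (d + n).choose d := by
  have h : ((1 - C a * X) ^ (d + 1))⁻¹ = rescale a (mk fun n ↦ ((d + n).choose d : K)) := by
    rw [PowerSeries.inv_eq_iff_mul_eq_one (by simp), ← rescale_X, ← map_one (rescale a),
      ← map_sub, ← map_pow, ← map_mul, mk_add_choose_mul_one_sub_pow_eq_one, map_one]
  rw [h, coeff_rescale, coeff_mk]

theorem coeff_inv_one_sub_C_mul_X_sq (a : K) (n : ℕ) :
    coeff n ((1 - C a * X) ^ 2)⁻¹ = (n + 1) * a ^ n := by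
  rw [coeff_inv_one_sub_C_mul_X_pow_succ a 1 n, Nat.choose_one_right]
  push_cast; ring

theorem coeff_coe_mul_inv_one_sub_C_mul_X_sq (p : Polynomial K) {a : K} (ha : a ≠ 0) {n : ℕ}
    (hn : p.natDegree ≤ n) :
    coeff n ((p : K⟦X⟧) * ((1 - C a * X) ^ 2)⁻¹) =
      a ^ n * (p.eval a⁻¹ * n +
        ∑ j ∈ range (p.natDegree + 1), p.coeff j * (1 - j) * a⁻¹ ^ j) := by
  have hsupp : ∀ j ∈ range (n + 1), j ∉ range (p.natDegree + 1) →
      p.coeff j * ((n - j : ℕ) + 1) * a ^ (n - j) = 0 := fun j _ hj => by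
    rw [p.coeff_eq_zero_of_natDegree_lt (by simpa using hj), zero_mul, zero_mul]
  rw [coeff_mul, Nat.sum_antidiagonal_eq_sum_range_succ_mk]
  simp only [Polynomial.coeff_coe, coeff_inv_one_sub_C_mul_X_sq, ← mul_assoc]
  rw [← sum_subset (range_subset_range.mpr (by omega)) hsupp,
    p.eval_eq_sum_range' (Nat.lt_succ_self _), sum_mul, ← sum_add_distrib, mul_sum]
  refine sum_congr rfl fun j hj => ?_
  have hjn : j ≤ n := (Nat.lt_succ_iff.mp (mem_range.mp hj)).trans hn
  rw [Nat.cast_sub hjn, pow_sub₀ a ha hjn, inv_pow]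
  ring

theorem tendsto_coeff_coe_mul_inv_one_sub_C_mul_X_sq_div (p : Polynomial ℝ) {a : ℝ} (ha : a ≠ 0)
    (hp : p.eval a⁻¹ ≠ 0) :
    Tendsto (fun n : ℕ ↦ coeff n ((p : ℝ⟦X⟧) * ((1 - C a * X) ^ 2)⁻¹) / (p.eval a⁻¹ * n * a ^ n))
      atTop (nhds 1) := by
  set B := ∑ j ∈ range (p.natDegree + 1), p.coeff j * (1 - j) * a⁻¹ ^ j with hB
  set c := p.eval a⁻¹ with hc
  have hlim : Tendsto (fun n : ℕ ↦ 1 + B / c / n) atTop (nhds 1) := by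
    simpa using tendsto_const_nhds.add (tendsto_const_div_atTop_nhds_zero_nat (B / c))
  refine hlim.congr' ?_
  filter_upwards [eventually_ge_atTop (max p.natDegree 1)] with n hn
  have hn0 : (n : ℝ) ≠ 0 := by exact_mod_cast (by omega : n ≠ 0)
  rw [coeff_coe_mul_inv_one_sub_C_mul_X_sq p ha (le_of_max_le_left hn), ← hB, ← hc]
  field_simp

end PowerSeries

theorem coeff_asymptotics_general (s k : ℕ) (hs : 0 < s) :
    Tendsto
      (fun n : ℕ =>
        (PowerSeries.coeff (R := ℝ) n
            ((1 - X) ^ 2 * (1 - X ^ s) ^ 2 * X ^ (k * s) * ((1 - 2 * X) ^ 2)⁻¹)) /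
          ((n / 4 : ℝ) * (1 - 2 ^ (-(s : ℤ))) ^ 2 * (2 ^ n / 2 ^ (k * s))))
      atTop (nhds 1) := by
  set p : Polynomial ℝ :=
    (1 - Polynomial.X) ^ 2 * (1 - Polynomial.X ^ s) ^ 2 * Polynomial.X ^ (k * s)
  have hp : p.eval 2⁻¹ = 4⁻¹ * (1 - 2⁻¹ ^ s) ^ 2 * 2⁻¹ ^ (k * s) := by
    simp only [p, Polynomial.eval_mul, Polynomial.eval_pow, Polynomial.eval_sub,
      Polynomial.eval_one, Polynomial.eval_X]
    norm_num
  have hp0 : p.eval 2⁻¹ ≠ 0 := by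
    have : (2⁻¹ : ℝ) ^ s < 1 := pow_lt_one₀ (by norm_num) (by norm_num) hs.ne'
    rw [hp]
    exact mul_ne_zero (mul_ne_zero (by norm_num) (pow_ne_zero _ (sub_pos.mpr this).ne'))
      (by positivity)
  have hseries : ((p : ℝ⟦X⟧) * ((1 - C 2 * X) ^ 2)⁻¹) =
      (1 - X) ^ 2 * (1 - X ^ s) ^ 2 * X ^ (k * s) * ((1 - 2 * X) ^ 2)⁻¹ := by
    simp [p, map_ofNat]
  have hden (n : ℕ) : (n / 4 : ℝ) * (1 - 2 ^ (-(s : ℤ))) ^ 2 * (2 ^ n / 2 ^ (k * s)) =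
      p.eval 2⁻¹ * n * 2 ^ n := by
    rw [hp, zpow_neg, zpow_natCast, ← inv_pow, inv_pow _ (k * s)]
    ring
  simpa only [hseries, hden] using
    tendsto_coeff_coe_mul_inv_one_sub_C_mul_X_sq_div p two_ne_zero hp0

/-- The `n`-th coefficient of `F(z) = (1-z)^2 (1-z^s)^2 z^{ks} (1-2z)^{-2}`
satisfies `[z^n] F(z) ~ (n/4) (1 - 2^{-s})^2 2^{n - ks}` as `n → ∞`. -/
theorem coeff_asymptotics (s k : ℕ) (hs : 0 < s) (hk : 0 < k) :
    Tendsto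
      (fun n : ℕ =>
        (PowerSeries.coeff (R := ℝ) n
            ((1 - X) ^ 2 * (1 - X ^ s) ^ 2 * X ^ (k * s) * ((1 - 2 * X) ^ 2)⁻¹)) /
          ((n / 4 : ℝ) * (1 - 2 ^ (-(s : ℤ))) ^ 2 * (2 ^ n / 2 ^ (k * s))))
      atTop (nhds 1) :=
  coeff_asymptotics_general s k hs
end

section
/- The generating function K(z) of Carlitz compositions satisfies K(z) = 1 / (1 - Σ_{j≥1} z^j/(1+z^j)) for |z| < r, where r is the smallest positive root of Σ_{j≥1} r^j/(1+r^j) = 1. -/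
/-- A Carlitz composition: a list of positive parts with no two equal adjacent parts. -/
def IsCarlitz (l : List ℕ) : Prop :=
  (∀ p ∈ l, 0 < p) ∧ l.Chain' (· ≠ ·)

/-- The number of Carlitz compositions of `n`. -/
noncomputable def carlitzCount (n : ℕ) : ℕ :=
  {l : List ℕ | IsCarlitz l ∧ l.sum = n}.ncard

/-!
Write `K_n` for the number of Carlitz compositions of `n`, `c(n, j)` for those starting with `j`,
and `F(z) = Σ_{j ≥ 1} z^j/(1+z^j)`. Prepending `j` to a composition of `n` not starting with `j`
gives `c(j + n, j) + c(n, j) = K_n`, i.e. `C_j(z) = z^j (K(z) - C_j(z))` for the generating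
functions, so `C_j = z^j/(1+z^j) · K` and `K = 1 + Σ_{j ≥ 1} C_j = 1 + F · K`.
Convergence comes from the same recursion applied to partial sums at `y = |z|`: each partial
sum `T` of `K(y)` satisfies `T ≤ 1 + F(y) T`, and `F(y) < F(r) = 1`.
-/
open Finset

lemma isCarlitz_iff {l : List ℕ} : IsCarlitz l ↔ (∀ p ∈ l, 0 < p) ∧ l.IsChain (· ≠ ·) :=
  Iff.rfl

lemma isCarlitz_nil : IsCarlitz [] :=
  ⟨by simp, List.isChain_nil⟩

lemma IsCarlitz.headI_eq_zero_iff {l : List ℕ} (hl : IsCarlitz l) : l.headI = 0 ↔ l = [] := by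
  cases l with
  | nil => simp
  | cons a t => simpa using (hl.1 a List.mem_cons_self).ne'

lemma isCarlitz_cons {j : ℕ} (hj : 0 < j) (l : List ℕ) :
    IsCarlitz (j :: l) ↔ IsCarlitz l ∧ l.headI ≠ j := by
  cases l with
  | nil =>
    exact ⟨fun _ => ⟨isCarlitz_nil, by simp [hj.ne]⟩,
      fun _ => ⟨by simpa using hj, List.isChain_singleton _⟩⟩
  | cons a t =>
    simp only [isCarlitz_iff, List.isChain_cons, List.forall_mem_cons, List.head?_cons,
      Option.mem_def, Option.some.injEq, forall_eq', List.headI_cons]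
    grind

lemma finite_setOf_isCarlitz_sum (n : ℕ) : {l : List ℕ | IsCarlitz l ∧ l.sum = n}.Finite :=
  (Set.finite_range (Composition.blocks : Composition n → List ℕ)).subset
    fun l hl => ⟨⟨l, hl.1.1 _, hl.2⟩, rfl⟩

noncomputable def carlitzFinset (n : ℕ) : Finset (List ℕ) :=
  (finite_setOf_isCarlitz_sum n).toFinset

@[simp]
lemma mem_carlitzFinset {n : ℕ} {l : List ℕ} : l ∈ carlitzFinset n ↔ IsCarlitz l ∧ l.sum = n :=
  Set.Finite.mem_toFinset _

lemma carlitzCount_eq_card (n : ℕ) : carlitzCount n = #(carlitzFinset n) :=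
  Set.ncard_eq_toFinset_card _ _

/-- Since `[].headI = 0`, the head `j = 0` counts exactly the empty composition. -/
noncomputable def carlitzHeadCount (n j : ℕ) : ℕ :=
  #{l ∈ carlitzFinset n | l.headI = j}

lemma carlitzHeadCount_le (n j : ℕ) : carlitzHeadCount n j ≤ carlitzCount n := by
  rw [carlitzCount_eq_card]
  exact card_filter_le _ _

lemma carlitzHeadCount_eq_zero_of_lt {n j : ℕ} (h : n < j) : carlitzHeadCount n j = 0 := by
  rw [carlitzHeadCount, card_eq_zero, filter_eq_empty_iff]
  intro l hl hlj
  have := l.headI_le_sum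
  rw [mem_carlitzFinset] at hl
  omega

lemma sum_carlitzHeadCount {n N : ℕ} (h : n < N) :
    ∑ j ∈ range N, carlitzHeadCount n j = carlitzCount n := by
  rw [carlitzCount_eq_card, card_eq_sum_card_fiberwise (f := List.headI) (t := range N)]
  · rfl
  intro l hl
  have := l.headI_le_sum
  simp only [coe_range, Set.mem_Iio, mem_coe, mem_carlitzFinset] at hl ⊢
  omega

lemma hasSum_carlitzHeadCount (n : ℕ) :
    HasSum (fun j => (carlitzHeadCount n j : ℝ)) (carlitzCount n) := by
  rw [← sum_carlitzHeadCount (Nat.lt_succ_self n), Nat.cast_sum]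
  exact hasSum_sum_of_ne_finset_zero fun j hj => by
    simp [carlitzHeadCount_eq_zero_of_lt (by simpa using hj)]

lemma carlitzHeadCount_zero_right (n : ℕ) :
    carlitzHeadCount n 0 = if n = 0 then 1 else 0 := by
  have : {l ∈ carlitzFinset n | l.headI = 0} = if n = 0 then {[]} else ∅ := by
    ext l
    simp only [mem_filter, mem_carlitzFinset]
    constructor
    · rintro ⟨⟨hl, hsum⟩, hhead⟩
      rw [hl.headI_eq_zero_iff] at hhead
      subst hhead
      simp [← hsum]
    · split_ifs with hn
      · rw [mem_singleton]
        rintro rfl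
        simp [isCarlitz_nil, hn]
      · simp
  rw [carlitzHeadCount, this]
  split_ifs <;> rfl

lemma carlitzHeadCount_add_left_self {n j : ℕ} (hj : 0 < j) :
    carlitzHeadCount (j + n) j + carlitzHeadCount n j = carlitzCount n := by
  have himage : {l ∈ carlitzFinset (j + n) | l.headI = j}
      = {l ∈ carlitzFinset n | ¬ l.headI = j}.image (j :: ·) := by
    ext l
    cases l with
    | nil => simp; omega
    | cons a t =>
      simp only [mem_filter, mem_carlitzFinset, List.headI_cons, mem_image, List.cons.injEq]
      constructor
      · rintro ⟨⟨hl, hsum⟩, rfl⟩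
        rw [isCarlitz_cons hj] at hl
        exact ⟨t, ⟨⟨hl.1, by simp at hsum; omega⟩, hl.2⟩, rfl, rfl⟩
      · rintro ⟨t, ⟨⟨hl, hsum⟩, hne⟩, rfl, rfl⟩
        exact ⟨⟨(isCarlitz_cons hj t).2 ⟨hl, hne⟩, by simp [hsum]⟩, rfl⟩
  rw [carlitzHeadCount, himage, card_image_of_injective _ List.cons_injective,
    carlitzCount_eq_card, carlitzHeadCount, add_comm]
  exact card_filter_add_card_filter_not _

lemma strictMonoOn_div_one_add : StrictMonoOn (fun t : ℝ => t / (1 + t)) (Set.Ici 0) := by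
  intro s hs t ht hst
  simp only [Set.mem_Ici] at hs ht
  rw [div_lt_div_iff₀ (by positivity) (by positivity)]
  nlinarith

lemma lt_one_of_summable_div_one_add_pow {y : ℝ}
    (hF : Summable fun j : ℕ => y ^ (j + 1) / (1 + y ^ (j + 1))) : y < 1 := by
  by_contra! h
  have hhalf (j : ℕ) : 1 / 2 ≤ y ^ (j + 1) / (1 + y ^ (j + 1)) := by
    have := one_le_pow₀ (n := j + 1) h
    rw [div_le_div_iff₀ two_pos (by positivity)]
    linarith
  have := ge_of_tendsto' hF.tendsto_atTop_zero hhalf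
  norm_num at this

lemma summable_div_one_add_pow_of_le {y r : ℝ} (hy : 0 ≤ y) (hyr : y ≤ r)
    (hF : Summable fun j : ℕ => r ^ (j + 1) / (1 + r ^ (j + 1))) :
    Summable fun j : ℕ => y ^ (j + 1) / (1 + y ^ (j + 1)) := by
  have hr := hy.trans hyr
  exact hF.of_nonneg_of_le (fun _ => by positivity) fun j =>
    strictMonoOn_div_one_add.monotoneOn (Set.mem_Ici.2 (by positivity))
      (Set.mem_Ici.2 (by positivity)) (pow_le_pow_left₀ hy hyr _)

lemma tsum_div_one_add_pow_lt {y r : ℝ} (hy : 0 ≤ y) (hyr : y < r)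
    (hF : Summable fun j : ℕ => r ^ (j + 1) / (1 + r ^ (j + 1))) :
    ∑' j : ℕ, y ^ (j + 1) / (1 + y ^ (j + 1)) < ∑' j : ℕ, r ^ (j + 1) / (1 + r ^ (j + 1)) := by
  have hr := hy.trans hyr.le
  refine Summable.tsum_lt_tsum (i := 0) (fun j => strictMonoOn_div_one_add.monotoneOn
      (Set.mem_Ici.2 (by positivity)) (Set.mem_Ici.2 (by positivity))
      (pow_le_pow_left₀ hy hyr.le _)) ?_ (summable_div_one_add_pow_of_le hy hyr.le hF) hF
  simpa using strictMonoOn_div_one_add (Set.mem_Ici.2 hy) (Set.mem_Ici.2 hr) hyr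

lemma carlitzHeadCount_mul_pow_add_left {j : ℕ} (hj : 0 < j) (x : ℝ) (m : ℕ) :
    (carlitzHeadCount (j + m) j : ℝ) * x ^ (j + m)
      = x ^ j * ((carlitzCount m : ℝ) * x ^ m - carlitzHeadCount m j * x ^ m) := by
  rw [← carlitzHeadCount_add_left_self (n := m) hj]
  push_cast
  ring

lemma sum_carlitzHeadCount_mul_pow_le {j : ℕ} (hj : 0 < j) {y : ℝ} (hy : 0 ≤ y) (N : ℕ) :
    ∑ n ∈ range N, (carlitzHeadCount n j : ℝ) * y ^ n
      ≤ y ^ j / (1 + y ^ j) * ∑ n ∈ range N, (carlitzCount n : ℝ) * y ^ n := by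
  set A := ∑ n ∈ range N, (carlitzHeadCount n j : ℝ) * y ^ n
  set B := ∑ n ∈ range N, (carlitzCount n : ℝ) * y ^ n
  have hA : A ≤ y ^ j * (B - A) := calc
    A ≤ ∑ n ∈ range (j + N), (carlitzHeadCount n j : ℝ) * y ^ n :=
      sum_le_sum_of_subset_of_nonneg (range_mono (by omega)) fun _ _ _ => by positivity
    _ = ∑ m ∈ range N, y ^ j * ((carlitzCount m : ℝ) * y ^ m - carlitzHeadCount m j * y ^ m) := by
      rw [sum_range_add, sum_eq_zero fun n hn => by
        simp [carlitzHeadCount_eq_zero_of_lt (mem_range.1 hn)], zero_add]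
      exact sum_congr rfl fun m _ => carlitzHeadCount_mul_pow_add_left hj y m
    _ = y ^ j * (B - A) := by rw [← mul_sum, sum_sub_distrib]
  rw [div_mul_eq_mul_div, le_div_iff₀ (by positivity)]
  linarith

lemma summable_carlitzCount_mul_pow {y : ℝ} (hy : 0 ≤ y)
    (hF : Summable fun j : ℕ => y ^ (j + 1) / (1 + y ^ (j + 1)))
    (hF_lt : ∑' j : ℕ, y ^ (j + 1) / (1 + y ^ (j + 1)) < 1) :
    Summable fun n => (carlitzCount n : ℝ) * y ^ n := by
  set F := ∑' j : ℕ, y ^ (j + 1) / (1 + y ^ (j + 1))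
  refine summable_of_sum_range_le (c := 1 / (1 - F)) (fun n => by positivity) fun N => ?_
  set T := ∑ n ∈ range N, (carlitzCount n : ℝ) * y ^ n
  have hT : 0 ≤ T := sum_nonneg fun _ _ => by positivity
  have hsplit : T = ∑ j ∈ range N, ∑ n ∈ range N, (carlitzHeadCount n (j + 1) : ℝ) * y ^ n
      + ∑ n ∈ range N, (carlitzHeadCount n 0 : ℝ) * y ^ n := by
    rw [← sum_range_succ' (fun j => ∑ n ∈ range N, (carlitzHeadCount n j : ℝ) * y ^ n), sum_comm]
    refine sum_congr rfl fun n hn => ?_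
    rw [← sum_mul, ← Nat.cast_sum, sum_carlitzHeadCount (by simp at hn; omega)]
  have hempty : ∑ n ∈ range N, (carlitzHeadCount n 0 : ℝ) * y ^ n ≤ 1 := by
    simp only [carlitzHeadCount_zero_right]
    push_cast
    simp only [ite_mul, one_mul, zero_mul, sum_ite_eq', mem_range]
    split_ifs <;> simp
  have hheads : ∑ j ∈ range N, ∑ n ∈ range N, (carlitzHeadCount n (j + 1) : ℝ) * y ^ n
      ≤ F * T := calc
    _ ≤ ∑ j ∈ range N, y ^ (j + 1) / (1 + y ^ (j + 1)) * T :=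
      sum_le_sum fun j _ => sum_carlitzHeadCount_mul_pow_le j.succ_pos hy N
    _ = (∑ j ∈ range N, y ^ (j + 1) / (1 + y ^ (j + 1))) * T := by rw [sum_mul]
    _ ≤ F * T := mul_le_mul_of_nonneg_right (hF.sum_le_tsum _ fun _ _ => by positivity) hT
  rw [le_div_iff₀ (by linarith)]
  nlinarith

lemma tsum_carlitzHeadCount_zero_mul_pow (x : ℝ) :
    ∑' n, (carlitzHeadCount n 0 : ℝ) * x ^ n = 1 := by
  simp [carlitzHeadCount_zero_right]

section Series

variable {x : ℝ} (hK : Summable fun n => (carlitzCount n : ℝ) * |x| ^ n)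
include hK

lemma summable_mul_pow_of_le_carlitzCount {a : ℕ → ℕ} (ha : ∀ n, a n ≤ carlitzCount n) :
    Summable fun n => (a n : ℝ) * x ^ n :=
  hK.of_norm_bounded fun n => by
    rw [norm_mul, norm_pow, Real.norm_natCast, Real.norm_eq_abs]
    gcongr
    exact ha n

lemma tsum_carlitzHeadCount_mul_pow {j : ℕ} (hj : 0 < j) (hx : |x| < 1) :
    ∑' n, (carlitzHeadCount n j : ℝ) * x ^ n
      = x ^ j / (1 + x ^ j) * ∑' n, (carlitzCount n : ℝ) * x ^ n := by
  have hc := summable_mul_pow_of_le_carlitzCount hK (carlitzHeadCount_le · j)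
  have hshift := hc.sum_add_tsum_nat_add j
  rw [sum_eq_zero fun n hn => by simp [carlitzHeadCount_eq_zero_of_lt (mem_range.1 hn)],
    zero_add] at hshift
  simp_rw [add_comm _ j, carlitzHeadCount_mul_pow_add_left hj, tsum_mul_left,
    (summable_mul_pow_of_le_carlitzCount hK fun _ => le_rfl).tsum_sub hc] at hshift
  have hden : 1 + x ^ j ≠ 0 := by
    have := abs_lt.1 ((abs_pow x j).symm ▸ pow_lt_one₀ (abs_nonneg x) hx hj.ne')
    linarith
  rw [div_mul_eq_mul_div, eq_div_iff hden]
  linear_combination -hshift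

lemma hasSum_tsum_carlitzHeadCount_mul_pow :
    HasSum (fun j => ∑' n, (carlitzHeadCount n j : ℝ) * x ^ n)
      (∑' n, (carlitzCount n : ℝ) * x ^ n) := by
  have hrow (n : ℕ) (z : ℝ) := (hasSum_carlitzHeadCount n).mul_right z
  have hnonneg : 0 ≤ fun q : ℕ × ℕ => (carlitzHeadCount q.1 q.2 : ℝ) * |x| ^ q.1 :=
    fun q => mul_nonneg (Nat.cast_nonneg _) (pow_nonneg (abs_nonneg x) _)
  have habs : Summable fun q : ℕ × ℕ => (carlitzHeadCount q.1 q.2 : ℝ) * |x| ^ q.1 :=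
    (summable_prod_of_nonneg hnonneg).2
      ⟨fun n => (hrow n (|x| ^ n)).summable, hK.congr fun n => ((hrow n (|x| ^ n)).tsum_eq).symm⟩
  have hprod : Summable (Function.uncurry fun j n => (carlitzHeadCount n j : ℝ) * x ^ n) :=
    habs.prod_symm.of_norm_bounded fun p => by simp [Function.uncurry]
  have hcols : HasSum (fun j => ∑' n, (carlitzHeadCount n j : ℝ) * x ^ n)
      (∑' j, ∑' n, (carlitzHeadCount n j : ℝ) * x ^ n) :=
    hprod.prod.hasSum
  rwa [← hprod.tsum_comm, tsum_congr fun n => (hrow n (x ^ n)).tsum_eq] at hcols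

end Series

theorem carlitz_gf_general (r : ℝ)
    (hroot : ∑' j : ℕ, r ^ (j + 1) / (1 + r ^ (j + 1)) = 1) :
    ∀ x : ℝ, |x| < r →
      (∑' n : ℕ, (carlitzCount n : ℝ) * x ^ n)
        = 1 / (1 - ∑' j : ℕ, x ^ (j + 1) / (1 + x ^ (j + 1))) := by
  intro x hx
  have hFr : Summable fun j : ℕ => r ^ (j + 1) / (1 + r ^ (j + 1)) := by
    by_contra h
    rw [tsum_eq_zero_of_not_summable h] at hroot
    exact zero_ne_one hroot
  have hF := summable_div_one_add_pow_of_le (abs_nonneg x) hx.le hFr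
  have hK := summable_carlitzCount_mul_pow (abs_nonneg x) hF
    ((tsum_div_one_add_pow_lt (abs_nonneg x) hx hFr).trans_eq hroot)
  have hx1 := lt_one_of_summable_div_one_add_pow hF
  have hsum := hasSum_tsum_carlitzHeadCount_mul_pow hK
  set K := ∑' n : ℕ, (carlitzCount n : ℝ) * x ^ n
  have hfix : K = 1 + (∑' j : ℕ, x ^ (j + 1) / (1 + x ^ (j + 1))) * K := calc
    K = ∑' j, ∑' n, (carlitzHeadCount n j : ℝ) * x ^ n := hsum.tsum_eq.symm
    _ = 1 + ∑' j, ∑' n, (carlitzHeadCount n (j + 1) : ℝ) * x ^ n := by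
      rw [hsum.summable.tsum_eq_zero_add, tsum_carlitzHeadCount_zero_mul_pow]
    _ = 1 + (∑' j : ℕ, x ^ (j + 1) / (1 + x ^ (j + 1))) * K := by
      rw [← tsum_mul_right]
      exact congrArg _ (tsum_congr fun j => tsum_carlitzHeadCount_mul_pow hK j.succ_pos hx1)
  exact eq_one_div_of_mul_eq_one_left (by linear_combination hfix)

/-- `K(z) = 1 / (1 - Σ_{j≥1} z^j/(1+z^j))` for `|z| < r`, where `r` is the
smallest positive root of `Σ_{j≥1} r^j/(1+r^j) = 1`. -/
theorem carlitz_gf (r : ℝ) (hr0 : 0 < r)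
    (hroot : ∑' j : ℕ, r ^ (j + 1) / (1 + r ^ (j + 1)) = 1)
    (hmin : ∀ y : ℝ, 0 < y → (∑' j : ℕ, y ^ (j + 1) / (1 + y ^ (j + 1))) = 1 → r ≤ y) :
    ∀ x : ℝ, |x| < r →
      (∑' n : ℕ, (carlitzCount n : ℝ) * x ^ n)
        = 1 / (1 - ∑' j : ℕ, x ^ (j + 1) / (1 + x ^ (j + 1))) :=
  carlitz_gf_general r hroot
end

section
/- The equation Σ_{j≥1} x^j/(1+x^j) = 1 has a unique solution r in (0,1), and r ≈ 0.571350; moreover the function x ↦ Σ_{j≥1} x^j/(1+x^j) is strictly increasing and continuous on [0,1). -/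
open Set

noncomputable def fC (x : ℝ) : ℝ := ∑' j : ℕ, x ^ (j + 1) / (1 + x ^ (j + 1))

lemma term_nonneg {x : ℝ} (hx : 0 ≤ x) (j : ℕ) :
    0 ≤ x ^ (j + 1) / (1 + x ^ (j + 1)) := by positivity

lemma term_le_pow {x : ℝ} (hx : 0 ≤ x) (j : ℕ) :
    x ^ (j + 1) / (1 + x ^ (j + 1)) ≤ x ^ (j + 1) := by
  have h : (0:ℝ) ≤ x ^ (j+1) := by positivity
  have : (1:ℝ) ≤ 1 + x ^ (j+1) := by linarith
  exact div_le_self h this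

lemma summable_pow {x : ℝ} (hx0 : 0 ≤ x) (hx1 : x < 1) :
    Summable (fun j : ℕ => x ^ (j + 1)) := by
  simpa [pow_succ] using (summable_geometric_of_lt_one hx0 hx1).mul_right x

lemma summable_fC {x : ℝ} (hx0 : 0 ≤ x) (hx1 : x < 1) :
    Summable (fun j : ℕ => x ^ (j + 1) / (1 + x ^ (j + 1))) :=
  Summable.of_nonneg_of_le (term_nonneg hx0) (term_le_pow hx0) (summable_pow hx0 hx1)

lemma frac_mono {a b : ℝ} (ha : 0 ≤ a) (hab : a ≤ b) : a / (1 + a) ≤ b / (1 + b) := by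
  rw [div_le_div_iff₀ (by linarith) (by linarith)]
  nlinarith

lemma frac_strict {a b : ℝ} (ha : 0 ≤ a) (hab : a < b) : a / (1 + a) < b / (1 + b) := by
  rw [div_lt_div_iff₀ (by linarith) (by linarith)]
  nlinarith

lemma fC_strictMono : StrictMonoOn fC (Set.Ico (0 : ℝ) 1) := by
  rintro x ⟨hx0, hx1⟩ y ⟨hy0, hy1⟩ hxy
  refine Summable.tsum_lt_tsum (i := 0) (fun j => ?_) ?_ (summable_fC hx0 hx1) (summable_fC hy0 hy1)
  · exact frac_mono (by positivity) (pow_le_pow_left₀ hx0 hxy.le _)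
  · simpa using frac_strict (by positivity) (pow_lt_pow_left₀ hxy hx0 one_ne_zero)

lemma fC_cont : ContinuousOn fC (Set.Ico (0 : ℝ) 1) := by
  intro x ⟨hx0, hx1⟩
  set a : ℝ := (x + 1) / 2 with ha
  have hxa : x < a := by simp [ha]; linarith
  have ha0 : 0 ≤ a := by simp [ha]; linarith
  have ha1 : a < 1 := by simp [ha]; linarith
  have hcont : ContinuousOn fC (Set.Icc (-a) a) := by
    apply continuousOn_tsum (u := fun j : ℕ => a ^ (j + 1) / (1 - a))
    · intro j
      apply ContinuousOn.div (by fun_prop) (by fun_prop)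
      intro y ⟨hy1, hy2⟩ h
      have h1 : |y ^ (j+1)| ≤ a ^ (j+1) := by
        rw [abs_pow]
        exact pow_le_pow_left₀ (abs_nonneg y) (abs_le.mpr ⟨hy1, hy2⟩) _
      have hal : a ^ (j+1) ≤ a := by
        calc a ^ (j+1) ≤ a ^ 1 := pow_le_pow_of_le_one ha0 ha1.le (by omega)
          _ = a := pow_one a
      have h2 : (1:ℝ) + y ^ (j+1) > 0 := by
        have := neg_abs_le (y ^ (j+1))
        nlinarith
      linarith [h ▸ h2]
    · exact (summable_pow ha0 ha1).div_const _
    · intro n y ⟨hy1, hy2⟩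
      have hya : |y| ≤ a := abs_le.mpr ⟨hy1, hy2⟩
      have h1 : |y ^ (n+1)| ≤ a ^ (n+1) := by
        rw [abs_pow]; exact pow_le_pow_left₀ (abs_nonneg y) hya _
      have hal : a ^ (n+1) ≤ a := by
        calc a ^ (n+1) ≤ a ^ 1 := pow_le_pow_of_le_one ha0 ha1.le (by omega)
          _ = a := pow_one a
      have h2 : (1:ℝ) - a ≤ 1 + y ^ (n+1) := by
        have := neg_abs_le (y ^ (n+1))
        linarith
      have h3 : (0:ℝ) < 1 + y ^ (n+1) := by linarith
      rw [Real.norm_eq_abs, abs_div, abs_of_pos h3]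
      exact div_le_div₀ (by positivity) h1 (by linarith) h2
  have hmem : Set.Icc (-a) a ∈ nhdsWithin x (Set.Ico (0:ℝ) 1) := by
    apply mem_nhdsWithin.mpr
    exact ⟨Set.Iio a, isOpen_Iio, hxa, fun y ⟨hy1, hy2⟩ => ⟨by linarith [hy2.1], hy1.le⟩⟩
  exact (hcont x ⟨by linarith, hxa.le⟩).mono_of_mem_nhdsWithin hmem

lemma partial_le_fC {x : ℝ} (hx0 : 0 ≤ x) (hx1 : x < 1) (N : ℕ) :
    ∑ j ∈ Finset.range N, x ^ (j+1) / (1 + x ^ (j+1)) ≤ fC x :=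
  Summable.sum_le_tsum _ (fun j _ => term_nonneg hx0 j) (summable_fC hx0 hx1)

lemma fC_le_partial {x : ℝ} (hx0 : 0 ≤ x) (hx1 : x < 1) (N : ℕ) :
    fC x ≤ ∑ j ∈ Finset.range N, x ^ (j+1) / (1 + x ^ (j+1)) + x ^ (N+1) * (1 - x)⁻¹ := by
  have hs := summable_fC hx0 hx1
  have h := Summable.sum_add_tsum_nat_add (f := fun j : ℕ => x ^ (j+1) / (1 + x ^ (j+1))) N hs
  rw [fC, ← h]
  gcongr
  have hs2 : Summable (fun i : ℕ => x ^ (i + N + 1) / (1 + x ^ (i + N + 1))) :=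
    (summable_nat_add_iff N).2 hs
  have hs3 : Summable (fun i : ℕ => x ^ (N+1) * x ^ i) :=
    (summable_geometric_of_lt_one hx0 hx1).mul_left _
  calc (∑' i : ℕ, x ^ (i + N + 1) / (1 + x ^ (i + N + 1)))
      ≤ ∑' i : ℕ, x ^ (N+1) * x ^ i := by
        apply Summable.tsum_le_tsum _ hs2 hs3
        intro i
        calc x ^ (i + N + 1) / (1 + x ^ (i + N + 1)) ≤ x ^ (i + N + 1) := term_le_pow hx0 _
          _ = x ^ (N+1) * x ^ i := by ring
    _ = x ^ (N+1) * (1 - x)⁻¹ := by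
        rw [tsum_mul_left, tsum_geometric_of_lt_one hx0 hx1]

lemma fC_low : fC 0.57134 < 1 := by
  refine lt_of_le_of_lt (fC_le_partial (by norm_num) (by norm_num) 22) ?_
  norm_num [Finset.sum_range_succ]

lemma fC_high : 1 < fC 0.57136 := by
  refine lt_of_lt_of_le ?_ (partial_le_fC (by norm_num) (by norm_num) 22)
  norm_num [Finset.sum_range_succ]

lemma fC_root_bounds {r : ℝ} (hr : r ∈ Set.Ioo (0:ℝ) 1) (h1 : fC r = 1) :
    0.57134 < r ∧ r < 0.57136 := by
  obtain ⟨hr0, hr1⟩ := hr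
  have ha : (0.57134 : ℝ) ∈ Set.Ico (0:ℝ) 1 := by norm_num
  have hb : (0.57136 : ℝ) ∈ Set.Ico (0:ℝ) 1 := by norm_num
  have hrm : r ∈ Set.Ico (0:ℝ) 1 := ⟨hr0.le, hr1⟩
  constructor
  · by_contra h
    push_neg at h
    have := (fC_strictMono.monotoneOn) hrm ha h
    rw [h1] at this
    exact absurd fC_low (by linarith)
  · by_contra h
    push_neg at h
    have := (fC_strictMono.monotoneOn) hb hrm h
    rw [h1] at this
    exact absurd fC_high (by linarith)

/-- The equation `Σ_{j≥1} x^j/(1+x^j) = 1` has a unique solution `r` in `(0,1)`,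
with `r ≈ 0.571350`; moreover `x ↦ Σ_{j≥1} x^j/(1+x^j)` is strictly increasing
and continuous on `[0,1)`. -/
theorem carlitz_root :
    (∃! r : ℝ, r ∈ Set.Ioo (0 : ℝ) 1 ∧ (∑' j : ℕ, r ^ (j + 1) / (1 + r ^ (j + 1))) = 1)
    ∧ (∀ r : ℝ, r ∈ Set.Ioo (0 : ℝ) 1 →
        (∑' j : ℕ, r ^ (j + 1) / (1 + r ^ (j + 1))) = 1 → |r - 0.571350| < 1e-5)
    ∧ StrictMonoOn (fun x : ℝ => ∑' j : ℕ, x ^ (j + 1) / (1 + x ^ (j + 1)))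
        (Set.Ico (0 : ℝ) 1)
    ∧ ContinuousOn (fun x : ℝ => ∑' j : ℕ, x ^ (j + 1) / (1 + x ^ (j + 1)))
        (Set.Ico (0 : ℝ) 1) := by
  have hsub : Set.Icc (0.57134:ℝ) 0.57136 ⊆ Set.Ico (0:ℝ) 1 := by
    intro y ⟨h1, h2⟩; constructor <;> norm_num <;> linarith
  obtain ⟨r, hrmem, hr1⟩ : ∃ r ∈ Set.Icc (0.57134:ℝ) 0.57136, fC r = 1 := by
    have hc : ContinuousOn fC (Set.Icc (0.57134:ℝ) 0.57136) := fC_cont.mono hsub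
    have := intermediate_value_Icc (by norm_num : (0.57134:ℝ) ≤ 0.57136) hc
    have h1mem : (1:ℝ) ∈ Set.Icc (fC 0.57134) (fC 0.57136) := ⟨fC_low.le, fC_high.le⟩
    obtain ⟨r, hr, hr1⟩ := this h1mem
    exact ⟨r, hr, hr1⟩
  have hrIoo : r ∈ Set.Ioo (0:ℝ) 1 := by
    have h2 := (hsub hrmem).2
    have h1 := hrmem.1
    constructor <;> [linarith; linarith]
  refine ⟨⟨r, ⟨hrIoo, hr1⟩, ?_⟩, ?_, fC_strictMono, fC_cont⟩
  · rintro s ⟨hs, hs1⟩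
    exact fC_strictMono.injOn ⟨hs.1.le, hs.2⟩ ⟨hrIoo.1.le, hrIoo.2⟩ (hs1.trans hr1.symm)
  · intro s hs hs1
    obtain ⟨h1, h2⟩ := fC_root_bounds hs hs1
    rw [abs_sub_lt_iff]
    constructor <;> [nlinarith; nlinarith]
end

section
/- For colored compositions in which a part of size n corresponds to a multiset of n balls colored with N available colors, the part generating function is P(z) = (1-z)^{-N} - 1, and the radius of convergence of the sequence generating function 1/(1-P(z)) is r = 1 - 2^{-1/N}, the smallest positive root of (1-z)^{-N} = 2. -/
/-!
Splitting off the first part, a composition of `n + 1` is a multiset of `j + 1` balls followed by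
a composition of `n - j`, so the counts `c n` obey `c (n + 1) = ∑ j ≤ n, p (j + 1) * c (n - j)`
with `p k = multichoose N k`, the coefficients of `P`. At `r = 1 - 2^{-1/N}` the weights
`p k * r ^ k` sum to `P r = 1`, so `b n = c n * r ^ n` is a renewal sequence driven by a
probability distribution. The recurrence then bounds `b n ≤ 1`, which gives convergence for
`|x| < r`, while summing it would give `∑ b = b 0 + ∑ b` with `b 0 = 1`, so the series diverges
at `r` and beyond.
-/

/-- The number of colored compositions of `n` in the `N`-color multiset model:
sequences of parts, where a part of size `p ≥ 1` is a multiset of `p` balls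
colored with `N` available colors. -/
noncomputable def multisetColorCount (N n : ℕ) : ℕ :=
  {l : List (Multiset (Fin N)) |
      (∀ m ∈ l, 0 < Multiset.card m) ∧ (l.map Multiset.card).sum = n}.ncard

open Finset

theorem Real.rpow_neg_one_div_pow {a : ℝ} (ha : 0 ≤ a) {N : ℕ} (hN : N ≠ 0) :
    (a ^ (-(1 : ℝ) / N)) ^ N = a⁻¹ := by
  rw [← Real.rpow_natCast, ← Real.rpow_mul ha, div_mul_cancel₀ _ (Nat.cast_ne_zero.mpr hN),
    Real.rpow_neg_one]

theorem Real.rpow_neg_one_div_zpow_neg {a : ℝ} (ha : 0 ≤ a) {N : ℕ} (hN : N ≠ 0) :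
    (a ^ (-(1 : ℝ) / N)) ^ (-(N : ℤ)) = a := by
  rw [zpow_neg, zpow_natCast, Real.rpow_neg_one_div_pow ha hN, inv_inv]

theorem le_rpow_neg_one_div_of_zpow_neg_eq {a s : ℝ} (ha : 0 < a) {N : ℕ} (hN : N ≠ 0)
    (hs : s ^ (-(N : ℤ)) = a) : s ≤ a ^ (-(1 : ℝ) / N) := by
  by_contra! hlt
  have hpow : a⁻¹ < s ^ N := by
    rw [← Real.rpow_neg_one_div_pow ha.le hN]
    exact pow_lt_pow_left₀ hlt (by positivity) hN
  have := inv_strictAnti₀ (by positivity) hpow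
  rw [inv_inv, ← zpow_natCast, ← zpow_neg, hs] at this
  exact this.false

theorem Nat.multichoose_eq_choose_pred {N : ℕ} (hN : 1 ≤ N) (k : ℕ) :
    N.multichoose k = (k + N - 1).choose (N - 1) := by
  rw [Nat.multichoose_eq, Nat.add_comm N k, Nat.choose_symm_of_eq_add]
  omega

theorem hasSum_choose_mul_pow_succ {𝕜 : Type*} [NormedDivisionRing 𝕜] {N : ℕ}
    (hN : 1 ≤ N) {x : 𝕜} (hx : ‖x‖ < 1) :
    HasSum (fun n : ℕ ↦ ((n + 1 + N - 1).choose (N - 1) : 𝕜) * x ^ (n + 1))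
      ((1 - x) ^ (-(N : ℤ)) - 1) := by
  obtain ⟨k, rfl⟩ : ∃ k, N = k + 1 := ⟨N - 1, by omega⟩
  have h := (hasSum_nat_add_iff' (f := fun n ↦ ((n + k).choose k : 𝕜) * x ^ n) 1).mpr
    (hasSum_choose_mul_geometric_of_norm_lt_one k hx)
  rw [sum_range_one] at h
  simp only [zero_add, Nat.choose_self, Nat.cast_one, pow_zero, mul_one] at h
  have hcoeff : ∀ n, n + 1 + (k + 1) - 1 = n + 1 + k := fun n ↦ by omega
  simpa only [hcoeff, Nat.add_sub_cancel, zpow_neg, zpow_natCast, one_div] using h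

theorem renewal_le_one {a b : ℕ → ℝ} (ha : ∀ n, 0 ≤ a n) (ha_sum : ∀ n, ∑ j ∈ range n, a j ≤ 1)
    (hb_zero : b 0 ≤ 1) (hrec : ∀ n, b (n + 1) = ∑ j ∈ range (n + 1), a j * b (n - j)) (n : ℕ) :
    b n ≤ 1 := by
  induction n using Nat.strong_induction_on with
  | _ n ih =>
    cases n with
    | zero => exact hb_zero
    | succ n =>
      calc b (n + 1) = ∑ j ∈ range (n + 1), a j * b (n - j) := hrec n
        _ ≤ ∑ j ∈ range (n + 1), a j := sum_le_sum fun j _ ↦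
            mul_le_of_le_one_right (ha j) (ih _ (by omega))
        _ ≤ 1 := ha_sum _

/-- Summing the recurrence gives `∑ b = b 0 + (∑ a) * (∑ b) = b 0 + ∑ b`. -/
theorem renewal_zero_eq_zero_of_summable {a b : ℕ → ℝ} (ha : HasSum a 1)
    (hrec : ∀ n, b (n + 1) = ∑ j ∈ range (n + 1), a j * b (n - j)) (hb : Summable b) :
    b 0 = 0 := by
  have hconv := tsum_mul_tsum_eq_tsum_sum_range_of_summable_norm
    (summable_norm_iff (f := a).mpr ha.summable) (summable_norm_iff (f := b).mpr hb)
  rw [ha.tsum_eq, one_mul, ← tsum_congr hrec] at hconv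
  linarith [hb.tsum_eq_zero_add]

theorem summable_mul_pow_of_mul_pow_le {c : ℕ → ℝ} {r x C : ℝ} (hc : ∀ n, 0 ≤ c n)
    (hbound : ∀ n, c n * r ^ n ≤ C) (hx : |x| < r) : Summable fun n ↦ c n * x ^ n := by
  have hr : 0 < r := (abs_nonneg x).trans_lt hx
  refine Summable.of_norm_bounded
    ((summable_geometric_of_lt_one (by positivity) ((div_lt_one hr).mpr hx)).mul_left C)
    fun n ↦ ?_
  calc ‖c n * x ^ n‖ = c n * r ^ n * (|x| / r) ^ n := by
        rw [norm_mul, norm_pow, Real.norm_eq_abs, Real.norm_eq_abs, abs_of_nonneg (hc n), div_pow]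
        field_simp
    _ ≤ C * (|x| / r) ^ n := by gcongr; exact hbound n

def multisetCompositions (N n : ℕ) : Set (List (Multiset (Fin N))) :=
  {l | (∀ m ∈ l, 0 < Multiset.card m) ∧ (l.map Multiset.card).sum = n}

theorem multisetColorCount_eq_ncard (N n : ℕ) :
    multisetColorCount N n = (multisetCompositions N n).ncard := rfl

theorem multisetCompositions_zero (N : ℕ) : multisetCompositions N 0 = {[]} := by
  ext (_ | ⟨m, t⟩)
  · simp [multisetCompositions]
  · simp only [multisetCompositions, List.mem_cons, forall_eq_or_imp, List.map_cons,
      List.sum_cons, Set.mem_ofPred_eq, Set.mem_singleton_iff, reduceCtorEq, iff_false]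
    omega

def consPart {N n : ℕ} :
    (Σ j : Fin (n + 1), Sym (Fin N) (j + 1) × multisetCompositions N (n - j)) →
      multisetCompositions N (n + 1)
  | ⟨j, s, t⟩ => ⟨(s : Multiset (Fin N)) :: t, by
      obtain ⟨t, ht_pos, ht_sum⟩ := t
      refine ⟨by simpa [s.2] using ht_pos, ?_⟩
      simp only [List.map_cons, List.sum_cons, ht_sum, Sym.card_coe]
      omega⟩

theorem consPart_bijective (N n : ℕ) : Function.Bijective (@consPart N n) := by
  constructor
  · rintro ⟨j, s, t⟩ ⟨j', s', t'⟩ h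
    simp only [consPart, Subtype.mk.injEq, List.cons.injEq] at h
    obtain ⟨hs, ht⟩ := h
    obtain rfl : j = j' := Fin.ext (by simpa using congrArg Multiset.card hs)
    obtain rfl : s = s' := Sym.coe_injective hs
    obtain rfl : t = t' := Subtype.ext ht
    rfl
  · rintro ⟨_ | ⟨m, t⟩, hpos, hsum⟩
    · simp at hsum
    · simp only [List.mem_cons, forall_eq_or_imp, List.map_cons, List.sum_cons] at hpos hsum
      refine ⟨⟨⟨Multiset.card m - 1, by omega⟩, ⟨m, by simp; omega⟩,
        ⟨t, hpos.2, by simp; omega⟩⟩, rfl⟩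

theorem finite_multisetCompositions (N n : ℕ) : (multisetCompositions N n).Finite := by
  induction n using Nat.strong_induction_on with
  | _ n ih =>
    cases n with
    | zero => simp [multisetCompositions_zero]
    | succ n =>
      have : ∀ j : Fin (n + 1), Finite (multisetCompositions N (n - j)) :=
        fun j ↦ (ih _ (by omega)).to_subtype
      exact Set.finite_coe_iff.mp (.of_surjective _ (consPart_bijective N n).2)

theorem multisetColorCount_zero (N : ℕ) : multisetColorCount N 0 = 1 := by
  simp [multisetColorCount_eq_ncard, multisetCompositions_zero]

theorem multisetColorCount_succ (N n : ℕ) :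
    multisetColorCount N (n + 1) =
      ∑ j ∈ range (n + 1), Nat.multichoose N (j + 1) * multisetColorCount N (n - j) := by
  have : ∀ j : Fin (n + 1), Finite (multisetCompositions N (n - j)) :=
    fun j ↦ (finite_multisetCompositions N _).to_subtype
  rw [multisetColorCount_eq_ncard, ← Nat.card_coe_set_eq,
    ← Nat.card_eq_of_bijective _ (consPart_bijective N n), Nat.card_sigma,
    ← Fin.sum_univ_eq_sum_range (fun j ↦ Nat.multichoose N (j + 1) * multisetColorCount N (n - j))]
  simp [Nat.card_prod, Sym.card_sym_eq_multichoose, multisetColorCount_eq_ncard]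

theorem multisetColorCount_mul_pow_succ (N n : ℕ) (x : ℝ) :
    (multisetColorCount N (n + 1) : ℝ) * x ^ (n + 1) =
      ∑ j ∈ range (n + 1), ((N.multichoose (j + 1) : ℝ) * x ^ (j + 1)) *
        ((multisetColorCount N (n - j) : ℝ) * x ^ (n - j)) := by
  rw [multisetColorCount_succ, Nat.cast_sum, sum_mul]
  refine sum_congr rfl fun j hj ↦ ?_
  rw [show n + 1 = (j + 1) + (n - j) by have := mem_range.mp hj; omega, pow_add]
  push_cast
  ring

theorem hasSum_multichoose_mul_pow_succ {N : ℕ} (hN : 1 ≤ N) {x : ℝ} (hx : |x| < 1) :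
    HasSum (fun j : ℕ ↦ (N.multichoose (j + 1) : ℝ) * x ^ (j + 1))
      ((1 - x) ^ (-(N : ℤ)) - 1) := by
  simpa only [Nat.multichoose_eq_choose_pred hN] using
    hasSum_choose_mul_pow_succ hN (x := x) (by rwa [Real.norm_eq_abs])

theorem hasSum_multichoose_mul_pow_succ_eq_one {N : ℕ} (hN : 1 ≤ N) {r : ℝ} (hr0 : 0 ≤ r)
    (hr1 : r < 1) (hPr : (1 - r) ^ (-(N : ℤ)) = 2) :
    HasSum (fun j : ℕ ↦ (N.multichoose (j + 1) : ℝ) * r ^ (j + 1)) 1 := by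
  convert hasSum_multichoose_mul_pow_succ hN (abs_lt.mpr ⟨by linarith, hr1⟩)
  rw [hPr]
  norm_num

theorem multisetColorCount_mul_pow_le_one {N : ℕ} (hN : 1 ≤ N) {r : ℝ} (hr0 : 0 ≤ r)
    (hr1 : r < 1) (hPr : (1 - r) ^ (-(N : ℤ)) = 2) (n : ℕ) :
    (multisetColorCount N n : ℝ) * r ^ n ≤ 1 :=
  renewal_le_one (b := fun n ↦ (multisetColorCount N n : ℝ) * r ^ n) (fun j ↦ by positivity)
    (fun n ↦ sum_le_hasSum _ (fun j _ ↦ by positivity)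
      (hasSum_multichoose_mul_pow_succ_eq_one hN hr0 hr1 hPr))
    (by simp [multisetColorCount_zero]) (multisetColorCount_mul_pow_succ N · r) n

theorem not_summable_multisetColorCount_mul_pow {N : ℕ} (hN : 1 ≤ N) {r : ℝ} (hr0 : 0 ≤ r)
    (hr1 : r < 1) (hPr : (1 - r) ^ (-(N : ℤ)) = 2) :
    ¬ Summable fun n ↦ (multisetColorCount N n : ℝ) * r ^ n := fun hsum ↦ by
  have := renewal_zero_eq_zero_of_summable
    (hasSum_multichoose_mul_pow_succ_eq_one hN hr0 hr1 hPr) (multisetColorCount_mul_pow_succ N · r) hsum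
  simp [multisetColorCount_zero] at this

/-- The part generating function is `P(z) = (1-z)^{-N} - 1`, and the radius of
convergence of the sequence generating function `1/(1-P(z))` is
`r = 1 - 2^{-1/N}`, the smallest positive root of `(1-z)^{-N} = 2`. -/
theorem multiset_color_gf (N : ℕ) (hN : 1 ≤ N) :
    (∀ x : ℝ, |x| < 1 →
      (∑' n : ℕ, ((n + 1 + N - 1).choose (N - 1) : ℝ) * x ^ (n + 1))
        = (1 - x) ^ (-(N : ℤ)) - 1)
    ∧ (∀ x : ℝ, |x| < 1 - (2 : ℝ) ^ (-(1 : ℝ) / N) →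
        Summable (fun n : ℕ => (multisetColorCount N n : ℝ) * x ^ n))
    ∧ (∀ x : ℝ, 1 - (2 : ℝ) ^ (-(1 : ℝ) / N) ≤ x →
        ¬ Summable (fun n : ℕ => (multisetColorCount N n : ℝ) * x ^ n))
    ∧ (1 - (1 - (2 : ℝ) ^ (-(1 : ℝ) / N))) ^ (-(N : ℤ)) = 2
    ∧ (∀ y : ℝ, 0 < y → ((1 : ℝ) - y) ^ (-(N : ℤ)) = 2 →
        1 - (2 : ℝ) ^ (-(1 : ℝ) / N) ≤ y) := by
  have hN0 : N ≠ 0 := by omega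
  set t := (2 : ℝ) ^ (-(1 : ℝ) / N)
  have ht0 : 0 < t := by positivity
  have ht1 : t < 1 := Real.rpow_lt_one_of_one_lt_of_neg one_lt_two (by simp [neg_div]; omega)
  have hroot : (1 - (1 - t)) ^ (-(N : ℤ)) = 2 := by
    rw [sub_sub_cancel, Real.rpow_neg_one_div_zpow_neg zero_le_two hN0]
  have hr0 : 0 ≤ 1 - t := by linarith
  have hr1 : 1 - t < 1 := by linarith
  refine ⟨fun x hx ↦ (hasSum_choose_mul_pow_succ hN (x := x) (by rwa [Real.norm_eq_abs])).tsum_eq,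
    fun x hx ↦ summable_mul_pow_of_mul_pow_le (fun n ↦ Nat.cast_nonneg _)
      (multisetColorCount_mul_pow_le_one hN hr0 hr1 hroot) hx,
    fun x hx hsum ↦ not_summable_multisetColorCount_mul_pow hN hr0 hr1 hroot
      (hsum.of_nonneg_of_le (fun n ↦ by positivity) fun n ↦ by gcongr),
    hroot,
    fun y _ hy ↦ by linarith [le_rpow_neg_one_div_of_zpow_neg_eq two_pos hN0 hy]⟩
end

section
/- Let c be a composition with c ≠ x y x for all decompositions, and θ the run-replacement map sending maximal runs of k copies of c to run parts k̄ of size k|c|. Then θ is a bijection from compositions of n onto sequences over the alphabet ℕ ∪ {k̄ : k ≥ 1} of total size n that contain no two consecutive run parts and no occurrence of c. -/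
/-!
`θ` is inverted by `expandRuns c`, which writes each run part `k̄` back as `k` copies of `c`;
that this is a left inverse is immediate from the recursion defining `θ`. The content lies in the
right inverse: expanding an admissible sequence `b` and applying `θ` again must not find a copy of
`c` that is not a run part of `b`. A copy starting at an ordinary part either consists of ordinary
parts only, which is excluded, or runs into the next run part; then a nonempty proper suffix of `c`
is also a prefix of `c`. Such a border can be shrunk to one of at most half the length of `c`,
i.e. `c = x ++ y ++ x`, which is excluded by hypothesis.
-/

/-- The size of a part in the extended alphabet `ℕ ⊕ ℕ`: `Sum.inl p` is an
ordinary part of size `p`, and `Sum.inr k` is the run part `k̄` of size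
`k * |c|`. -/
def runPartSize (c : List ℕ) : ℕ ⊕ ℕ → ℕ
  | Sum.inl p => p
  | Sum.inr k => k * c.sum

/-- The run-replacement map `θ`: each maximal run of `k` consecutive copies of
`c` in `a` is replaced by the single run part `k̄ = Sum.inr k`; all other parts
`p` become ordinary parts `Sum.inl p`. -/
def theta (c : List ℕ) (a : List ℕ) : List (ℕ ⊕ ℕ) :=
  if hc : c = [] then a.map Sum.inl
  else
    match a with
    | [] => []
    | p :: rest =>
      if c <+: (p :: rest) then
        match theta c ((p :: rest).drop c.length) with
        | Sum.inr k :: t => Sum.inr (k + 1) :: t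
        | t => Sum.inr 1 :: t
      else Sum.inl p :: theta c rest
termination_by a.length
decreasing_by
  · simp only [List.length_drop, List.length_cons]
    have : 0 < c.length := by
      cases c with
      | nil => exact absurd rfl hc
      | cons _ _ => simp
    omega
  · simp

namespace List

variable {α : Type*}

def IsBorderFree (c : List α) : Prop :=
  ∀ v, v <+: c → v <:+ c → v = [] ∨ v = c

theorem isBorderFree_of_not_exists_eq_append {c : List α}
    (h : ¬ ∃ x y : List α, x ≠ [] ∧ c = x ++ y ++ x) : c.IsBorderFree := by
  intro v hpre hsuf
  induction hv : v.length using Nat.strong_induction_on generalizing v with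
  | _ m ih =>
    obtain ⟨u, rfl⟩ := hsuf
    rcases le_or_gt v.length u.length with hvu | huv
    · obtain ⟨y, rfl⟩ : v <+: u := prefix_of_prefix_length_le hpre (prefix_append u v) hvu
      left
      by_contra hne
      exact h ⟨v, y, hne, rfl⟩
    · obtain ⟨w, rfl⟩ : u <+: v := prefix_of_prefix_length_le (prefix_append u v) hpre huv.le
      rcases eq_or_ne u [] with rfl | hu
      · simp
      -- a border `u ++ w` longer than half of `u ++ (u ++ w)` overlaps itself in the border `w`
      have hwpre : w <+: u ++ (u ++ w) := ((prefix_append_right_inj u).1 hpre).trans hpre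
      have hwsuf : w <:+ u ++ (u ++ w) := (suffix_append u w).trans (suffix_append u _)
      have hu0 : 0 < u.length := length_pos_iff.2 hu
      rcases ih w.length (by simp at hv; omega) w hwpre hwsuf rfl with rfl | hw
      · simp at huv
      · have := congrArg length hw
        simp at this
        omega

variable {c : List α}

theorem exists_eq_flatten_replicate_append (hc : c ≠ []) {a : List α} (h : c <+: a) :
    ∃ k s, a = (replicate (k + 1) c).flatten ++ s ∧ ¬ c <+: s := by
  obtain ⟨s, rfl⟩ := h
  by_cases hs : c <+: s
  · obtain ⟨k, s', rfl, hs'⟩ := exists_eq_flatten_replicate_append hc hs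
    exact ⟨k + 1, s', by simp [replicate_succ], hs'⟩
  · exact ⟨0, s, by simp, hs⟩
termination_by a.length
decreasing_by subst_vars; simp [length_pos_iff.2 hc]

@[elab_as_elim]
theorem induction_on_runs (hc : c ≠ []) {motive : List α → Prop} (nil : motive [])
    (cons : ∀ p l, ¬ c <+: p :: l → motive l → motive (p :: l))
    (run : ∀ k s, ¬ c <+: s → motive s → motive ((replicate (k + 1) c).flatten ++ s)) :
    ∀ a, motive a
  | [] => nil
  | p :: l => by
    by_cases h : c <+: p :: l
    · obtain ⟨k, s, hs, hcs⟩ := exists_eq_flatten_replicate_append hc h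
      have : s.length ≤ l.length := by
        have hlen := congrArg length hs
        simp [replicate_succ] at hlen
        have := length_pos_iff.2 hc
        omega
      exact hs ▸ run k s hcs (induction_on_runs hc nil cons run s)
    · exact cons p l h (induction_on_runs hc nil cons run l)
termination_by a => a.length

end List

open List

section expandRuns

variable {α : Type*} (c : List α)

def expandRuns (b : List (α ⊕ ℕ)) : List α :=
  b.flatMap (Sum.elim (fun p => [p]) fun k => (replicate k c).flatten)

@[simp]
theorem expandRuns_nil : expandRuns c [] = [] := rfl

@[simp]
theorem expandRuns_cons_inl (p : α) (b : List (α ⊕ ℕ)) :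
    expandRuns c (.inl p :: b) = p :: expandRuns c b := rfl

@[simp]
theorem expandRuns_cons_inr (k : ℕ) (b : List (α ⊕ ℕ)) :
    expandRuns c (.inr k :: b) = (replicate k c).flatten ++ expandRuns c b := rfl

@[simp]
theorem expandRuns_append (b b' : List (α ⊕ ℕ)) :
    expandRuns c (b ++ b') = expandRuns c b ++ expandRuns c b' :=
  flatMap_append

@[simp]
theorem expandRuns_map_inl (u : List α) : expandRuns c (u.map .inl) = u := by
  induction u <;> simp_all

variable {c}

theorem mem_expandRuns_of_inl_mem {p : α} {b : List (α ⊕ ℕ)} (h : .inl p ∈ b) :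
    p ∈ expandRuns c b :=
  mem_flatMap.2 ⟨_, h, mem_singleton_self p⟩

theorem inl_mem_or_mem_of_mem_expandRuns {p : α} {b : List (α ⊕ ℕ)}
    (h : p ∈ expandRuns c b) : .inl p ∈ b ∨ p ∈ c := by
  obtain ⟨q | k, hq, hp⟩ := mem_flatMap.1 h
  · exact .inl (mem_singleton.1 hp ▸ hq)
  · obtain ⟨l, hl, hpl⟩ := mem_flatten.1 hp
    exact .inr (eq_of_mem_replicate hl ▸ hpl)

theorem prefix_expandRuns_of_map_inl_prefix {u : List α} {b : List (α ⊕ ℕ)}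
    (h : u.map .inl <+: b) : u <+: expandRuns c b := by
  obtain ⟨r, rfl⟩ := h
  exact ⟨expandRuns c r, by simp⟩

theorem map_inl_prefix_of_prefix_expandRuns (hbf : c.IsBorderFree) {t : List (α ⊕ ℕ)}
    (ht : ∀ k, .inr k ∈ t → 0 < k) {u v : List α} (huv : c = u ++ v) (hu : u ≠ [])
    (hv : v <+: expandRuns c t) : v.map .inl <+: t := by
  induction t generalizing u v with
  | nil => simp [prefix_nil.1 hv]
  | cons q t ih =>
    rcases q with p | k
    · rcases v with _ | ⟨x, v⟩
      · exact nil_prefix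
      obtain ⟨rfl, hv'⟩ := cons_prefix_cons.1 hv
      exact cons_prefix_cons.2 ⟨rfl, ih (fun k hk => ht k (mem_cons_of_mem _ hk))
        (u := u ++ [x]) (by simp [huv]) (by simp) hv'⟩
    · obtain ⟨k, rfl⟩ := Nat.exists_eq_add_one.2 (ht k mem_cons_self)
      have hvc : v.length ≤ c.length := by simp [huv]
      have hvpre : v <+: c := prefix_of_prefix_length_le hv (by simp [replicate_succ]) hvc
      rcases hbf v hvpre ⟨u, huv.symm⟩ with rfl | hvc
      · exact nil_prefix
      · exact absurd (by simpa [← hvc] using huv) hu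

end expandRuns

theorem sum_expandRuns (c : List ℕ) (b : List (ℕ ⊕ ℕ)) :
    (expandRuns c b).sum = (b.map (runPartSize c)).sum := by
  induction b with
  | nil => rfl
  | cons q b ih =>
    rcases q with p | k <;> simp [ih, runPartSize, sum_flatten]

section theta

variable {c : List ℕ}

@[simp]
theorem theta_nil : theta c [] = [] := by
  rw [theta]; split <;> rfl

theorem theta_cons_of_not_prefix (hc : c ≠ []) {p : ℕ} {l : List ℕ} (h : ¬ c <+: p :: l) :
    theta c (p :: l) = .inl p :: theta c l := by
  rw [theta]; simp [hc, h]

theorem isLeft_of_mem_head?_theta (hc : c ≠ []) {a : List ℕ} (h : ¬ c <+: a) :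
    ∀ x ∈ (theta c a).head?, x.isLeft := by
  cases a with
  | nil => simp
  | cons p l => simp [theta_cons_of_not_prefix hc h]

theorem theta_of_prefix (hc : c ≠ []) {a : List ℕ} (h : c <+: a) :
    theta c a = match theta c (a.drop c.length) with
      | .inr k :: t => .inr (k + 1) :: t
      | t => .inr 1 :: t := by
  cases a with
  | nil => exact absurd (prefix_nil.1 h) hc
  | cons p l => rw [theta]; simp [hc, h]

theorem theta_flatten_replicate_append (hc : c ≠ []) (k : ℕ) {s : List ℕ} (hs : ¬ c <+: s) :
    theta c ((replicate (k + 1) c).flatten ++ s) = .inr (k + 1) :: theta c s := by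
  rw [replicate_succ, flatten_cons, append_assoc, theta_of_prefix hc (prefix_append _ _),
    drop_left]
  cases k with
  | zero =>
    rw [replicate_zero, flatten_nil, nil_append]
    rcases hts : theta c s with _ | ⟨_ | _, _⟩
    · rfl
    · rfl
    · simpa [hts] using isLeft_of_mem_head?_theta hc hs
  | succ k => rw [theta_flatten_replicate_append hc k hs]

theorem expandRuns_theta (hc : c ≠ []) (a : List ℕ) : expandRuns c (theta c a) = a := by
  induction a using induction_on_runs hc with
  | nil => simp
  | cons p l h ih => simp [theta_cons_of_not_prefix hc h, ih]
  | run k s h ih => simp [theta_flatten_replicate_append hc k h, ih]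

theorem pos_of_inr_mem_theta (hc : c ≠ []) {a : List ℕ} {k : ℕ} (h : .inr k ∈ theta c a) :
    0 < k := by
  induction a using induction_on_runs hc with
  | nil => simp at h
  | cons p l hl ih => simp_all [theta_cons_of_not_prefix hc hl]
  | run j s hs ih =>
    rw [theta_flatten_replicate_append hc j hs, mem_cons] at h
    rcases h with h | h
    · simp_all
    · exact ih h

theorem isChain_theta (hc : c ≠ []) (a : List ℕ) :
    (theta c a).IsChain (fun p q => p.isLeft = true ∨ q.isLeft = true) := by
  induction a using induction_on_runs hc with
  | nil => simp
  | cons p l h ih =>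
    rw [theta_cons_of_not_prefix hc h]
    exact isChain_cons.2 ⟨fun _ _ => .inl rfl, ih⟩
  | run k s h ih =>
    rw [theta_flatten_replicate_append hc k h]
    exact isChain_cons.2 ⟨fun y hy => .inr (isLeft_of_mem_head?_theta hc h y hy), ih⟩

theorem not_infix_theta (hc : c ≠ []) (a : List ℕ) : ¬ c.map .inl <:+: theta c a := by
  induction a using induction_on_runs hc with
  | nil => simpa using hc
  | cons p l h ih =>
    rw [theta_cons_of_not_prefix hc h, infix_cons_iff, not_or]
    refine ⟨fun hpre => h ?_, ih⟩
    simpa [expandRuns_theta hc] using prefix_expandRuns_of_map_inl_prefix (c := c) hpre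
  | run k s h ih =>
    rw [theta_flatten_replicate_append hc k h, infix_cons_iff, not_or]
    obtain ⟨x, c, rfl⟩ := exists_cons_of_ne_nil hc
    exact ⟨by simp, ih⟩

theorem exists_theta_eq_inr_cons (hc : c ≠ []) {a : List ℕ} (h : c <+: a) :
    ∃ k t, theta c a = .inr k :: t := by
  obtain ⟨k, s, rfl, hs⟩ := exists_eq_flatten_replicate_append hc h
  exact ⟨_, _, theta_flatten_replicate_append hc k hs⟩

theorem theta_expandRuns (hc : c ≠ []) (hbf : c.IsBorderFree)
    {b : List (ℕ ⊕ ℕ)} (hpos : ∀ k, .inr k ∈ b → 0 < k)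
    (hchain : b.IsChain (fun p q => p.isLeft = true ∨ q.isLeft = true))
    (hni : ¬ c.map .inl <:+: b) : theta c (expandRuns c b) = b := by
  induction b with
  | nil => simp
  | cons q t ih =>
    have hpos' : ∀ k, .inr k ∈ t → 0 < k := fun k hk => hpos k (mem_cons_of_mem _ hk)
    have iht : theta c (expandRuns c t) = t :=
      ih hpos' (isChain_cons.1 hchain).2 fun h => hni (h.trans (suffix_cons _ _).isInfix)
    rcases q with p | k
    · have hnp : ¬ c <+: p :: expandRuns c t := by
        intro hpre
        obtain ⟨x, v, rfl⟩ := exists_cons_of_ne_nil hc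
        obtain ⟨rfl, hv⟩ := cons_prefix_cons.1 hpre
        exact hni (cons_prefix_cons.2 ⟨rfl,
          map_inl_prefix_of_prefix_expandRuns hbf hpos' (u := [x]) rfl (by simp) hv⟩).isInfix
      rw [expandRuns_cons_inl, theta_cons_of_not_prefix hc hnp, iht]
    · obtain ⟨k, rfl⟩ := Nat.exists_eq_add_one.2 (hpos k mem_cons_self)
      -- otherwise `t = theta c (expandRuns c t)` would start with a run part
      have hns : ¬ c <+: expandRuns c t := by
        intro hpre
        obtain ⟨j, r, hjr⟩ := exists_theta_eq_inr_cons hc hpre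
        rw [iht] at hjr
        subst hjr
        simpa using (isChain_cons_cons.1 hchain).1
      rw [expandRuns_cons_inr, theta_flatten_replicate_append hc k hns, iht]

end theta

/-- `θ` is a bijection from compositions of `n` onto sequences over the
alphabet `ℕ ∪ {k̄ : k ≥ 1}` of total size `n` containing no two consecutive run
parts and no occurrence of `c` (as a consecutive block of ordinary parts). -/
theorem theta_bijection (c : List ℕ) (hc : c ≠ []) (hpos : ∀ p ∈ c, 0 < p)
    (hxyx : ¬ ∃ x y : List ℕ, x ≠ [] ∧ c = x ++ y ++ x) (n : ℕ) :
    Set.BijOn (theta c)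
      {a : List ℕ | (∀ p ∈ a, 0 < p) ∧ a.sum = n}
      {b : List (ℕ ⊕ ℕ) |
        (∀ q ∈ b, 0 < runPartSize c q) ∧
        ((b.map (runPartSize c)).sum = n) ∧
        b.Chain' (fun p q => p.isLeft = true ∨ q.isLeft = true) ∧
        ¬ (c.map Sum.inl) <:+: b} := by
  have hbf := isBorderFree_of_not_exists_eq_append hxyx
  refine Set.InvOn.bijOn (f' := expandRuns c) ⟨fun a _ => expandRuns_theta hc a,
    fun b ⟨hb, _, hchain, hni⟩ =>
      theta_expandRuns hc hbf (fun k hk => Nat.pos_of_mul_pos_right (hb _ hk)) hchain hni⟩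
    ?_ ?_
  · rintro a ⟨ha, rfl⟩
    refine ⟨?_, by rw [← sum_expandRuns, expandRuns_theta hc], isChain_theta hc a,
      not_infix_theta hc a⟩
    rintro (p | k) hq
    · exact ha p (expandRuns_theta hc a ▸ mem_expandRuns_of_inl_mem hq)
    · exact Nat.mul_pos (pos_of_inr_mem_theta hc hq) (sum_pos c hpos hc)
  · rintro b ⟨hb, rfl, -, -⟩
    refine ⟨fun p hp => ?_, sum_expandRuns c b⟩
    rcases inl_mem_or_mem_of_mem_expandRuns hp with h | h
    · exact hb _ h
    · exact hpos p h
end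

section
/- For the class of all compositions and a fixed composition c of size s, the ratio [z^n]F(z) / [z^n]K(z), where K(z) = (1-z)/(1-2z) and F(z) = (1-z)^2(1-z^s)^2 z^{ks}(1-2z)^{-2}, is asymptotic to (n/2)(1-2^{-s})^2 2^{-ks} as n → ∞; in particular for c = (1) (s = 1) the constant C = (1/2)(1-2^{-s})^2 equals 1/8. -/
/-!
For a polynomial `P`, `[z^n] P(z)/(1 - a z)^2 = ∑ⱼ pⱼ (n - j + 1) a^(n-j)`, which is
`n aⁿ P(1/a) (1 + O(1/n))`. With `a = 2`, `[z^n] K = 2^(n-1)` and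
`P = (1-z)^2 (1-z^s)^2 z^(ks)`, the ratio is therefore `2 n P(1/2) (1 + O(1/n))`, and
`2 P(1/2) = (1/2)(1 - 2^(-s))^2 2^(-ks)`.
-/

open PowerSeries Filter

theorem PowerSeries.inv_one_sub_C_mul_X_pow_succ {k : Type*} [Field k] (a : k) (d : ℕ) :
    ((1 - C a * X) ^ (d + 1))⁻¹ = rescale a (mk fun n => ((d + n).choose d : k)) := by
  rw [PowerSeries.inv_eq_iff_mul_eq_one (by simp), ← rescale_X, ← map_one (rescale a),
    ← map_sub, ← map_pow, ← map_mul, mk_add_choose_mul_one_sub_pow_eq_one, map_one]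

theorem PowerSeries.coeff_inv_one_sub_C_mul_X {k : Type*} [Field k] (a : k) (n : ℕ) :
    coeff n (1 - C a * X)⁻¹ = a ^ n := by
  simpa using congrArg (coeff n) (inv_one_sub_C_mul_X_pow_succ a 0)

theorem PowerSeries.coeff_inv_one_sub_C_mul_X_sq_s19 {k : Type*} [Field k] (a : k) (n : ℕ) :
    coeff n ((1 - C a * X) ^ 2)⁻¹ = (n + 1) * a ^ n := by
  rw [inv_one_sub_C_mul_X_pow_succ, coeff_rescale, coeff_mk, add_comm 1 n,
    Nat.choose_one_right]
  push_cast
  ring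

theorem PowerSeries.coeff_succ_one_sub_X_mul_inv_one_sub_C_mul_X {k : Type*} [Field k]
    (a : k) (n : ℕ) : coeff (n + 1) ((1 - X) * (1 - C a * X)⁻¹) = (a - 1) * a ^ n := by
  rw [sub_mul, one_mul, map_sub, coeff_succ_X_mul, coeff_inv_one_sub_C_mul_X,
    coeff_inv_one_sub_C_mul_X, pow_succ]
  ring

theorem tendsto_coeff_X_pow_mul_inv_one_sub_C_mul_X_sq {a : ℝ} (ha : a ≠ 0) (j : ℕ) :
    Tendsto (fun n : ℕ => coeff n (X ^ j * ((1 - C a * X) ^ 2)⁻¹) / (n * a ^ n)) atTop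
      (nhds (a⁻¹ ^ j)) := by
  have hlim : Tendsto (fun n : ℕ => (1 + (1 - j : ℝ) / n) * a⁻¹ ^ j) atTop
      (nhds ((1 + 0) * a⁻¹ ^ j)) :=
    ((tendsto_const_div_atTop_nhds_zero_nat _).const_add 1).mul_const _
  rw [add_zero, one_mul] at hlim
  refine hlim.congr' ?_
  filter_upwards [eventually_gt_atTop j] with n hn
  obtain ⟨m, rfl⟩ := Nat.exists_eq_add_of_lt hn
  rw [coeff_X_pow_mul', if_pos (by omega), show j + m + 1 - j = m + 1 by omega,
    coeff_inv_one_sub_C_mul_X_sq_s19]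
  push_cast
  rw [inv_pow]
  field_simp
  ring

theorem tendsto_coeff_mul_inv_one_sub_C_mul_X_sq {a : ℝ} (ha : a ≠ 0) (P : Polynomial ℝ) :
    Tendsto (fun n : ℕ => coeff n ((P : ℝ⟦X⟧) * ((1 - C a * X) ^ 2)⁻¹) / (n * a ^ n)) atTop
      (nhds (P.eval a⁻¹)) := by
  induction P using Polynomial.induction_on' with
  | add p q hp hq =>
    simpa only [Polynomial.coe_add, add_mul, map_add, add_div, Polynomial.eval_add]
      using hp.add hq
  | monomial j c =>
    simpa only [← Polynomial.C_mul_X_pow_eq_monomial, Polynomial.coe_mul, Polynomial.coe_C,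
      Polynomial.coe_pow, Polynomial.coe_X, mul_assoc, coeff_C_mul, mul_div_assoc,
      Polynomial.eval_mul, Polynomial.eval_C, Polynomial.eval_pow, Polynomial.eval_X] using
      (tendsto_coeff_X_pow_mul_inv_one_sub_C_mul_X_sq ha j).const_mul c

theorem run_constant_all_compositions_general (s k : ℕ) (hs : 0 < s) :
    Tendsto
      (fun n : ℕ =>
        ((PowerSeries.coeff (R := ℝ) n
            ((1 - X) ^ 2 * (1 - X ^ s) ^ 2 * X ^ (k * s) * ((1 - 2 * X) ^ 2)⁻¹)) /
          (PowerSeries.coeff (R := ℝ) n ((1 - X) * (1 - 2 * X)⁻¹))) /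
          ((n / 2 : ℝ) * (1 - 2 ^ (-(s : ℤ))) ^ 2 * 2 ^ (-((k * s : ℕ) : ℤ))))
      atTop (nhds 1)
    ∧ ((1 / 2 : ℝ) * (1 - 2 ^ (-(1 : ℤ))) ^ 2 = 1 / 8) := by
  refine ⟨?_, by norm_num⟩
  have hsub : (1 - 2 ^ (-(s : ℤ)) : ℝ) ≠ 0 :=
    sub_ne_zero.2 (zpow_lt_one_of_neg₀ one_lt_two (by omega)).ne'
  let P : Polynomial ℝ := (1 - .X) ^ 2 * (1 - .X ^ s) ^ 2 * .X ^ (k * s)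
  have hP : P.eval 2⁻¹ = (1 - 2 ^ (-(s : ℤ))) ^ 2 * 2 ^ (-((k * s : ℕ) : ℤ)) / 4 := by
    simp only [P, Polynomial.eval_mul, Polynomial.eval_pow, Polynomial.eval_sub,
      Polynomial.eval_one, Polynomial.eval_X, zpow_neg, zpow_natCast, inv_pow]
    ring
  have hC2 : (C 2 : ℝ⟦X⟧) = 2 := map_ofNat C 2
  have hFP : (P : ℝ⟦X⟧) * ((1 - C 2 * X) ^ 2)⁻¹ =
      (1 - X) ^ 2 * (1 - X ^ s) ^ 2 * X ^ (k * s) * ((1 - 2 * X) ^ 2)⁻¹ := by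
    simp [P, hC2]
  have hK (m : ℕ) : coeff (m + 1) ((1 - X) * (1 - 2 * X)⁻¹ : ℝ⟦X⟧) = 2 ^ m := by
    rw [← hC2, coeff_succ_one_sub_X_mul_inv_one_sub_C_mul_X]
    norm_num
  have hF := (tendsto_coeff_mul_inv_one_sub_C_mul_X_sq two_ne_zero P).div_const (P.eval 2⁻¹)
  rw [div_self (by rw [hP]; positivity), hFP, hP] at hF
  refine hF.congr' ?_
  filter_upwards [eventually_gt_atTop 0] with n hn
  obtain ⟨m, rfl⟩ := Nat.exists_eq_add_of_lt hn
  rw [zero_add, hK, pow_succ, Nat.cast_succ]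
  field_simp
  ring

/-- With `K(z) = (1-z)/(1-2z)` (all compositions) and
`F(z) = (1-z)^2 (1-z^s)^2 z^{ks} (1-2z)^{-2}` (marked `k`-runs of a composition
`c` of size `s`), the ratio `[z^n]F / [z^n]K` is asymptotic to
`(n/2)(1-2^{-s})^2 2^{-ks}`; in particular for `s = 1` the constant
`C = (1/2)(1-2^{-s})^2` equals `1/8`. -/
theorem run_constant_all_compositions (s k : ℕ) (hs : 0 < s) (hk : 0 < k) :
    Tendsto
      (fun n : ℕ =>
        ((PowerSeries.coeff (R := ℝ) n
            ((1 - X) ^ 2 * (1 - X ^ s) ^ 2 * X ^ (k * s) * ((1 - 2 * X) ^ 2)⁻¹)) /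
          (PowerSeries.coeff (R := ℝ) n ((1 - X) * (1 - 2 * X)⁻¹))) /
          ((n / 2 : ℝ) * (1 - 2 ^ (-(s : ℤ))) ^ 2 * 2 ^ (-((k * s : ℕ) : ℤ))))
      atTop (nhds 1)
    ∧ ((1 / 2 : ℝ) * (1 - 2 ^ (-(1 : ℤ))) ^ 2 = 1 / 8) :=
  run_constant_all_compositions_general s k hs
end
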